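/- arXiv:2507.21148 — 5 statements merged into one kernel-verified Lean document; each statement's English description precedes it below -/
import Mathlib

section
/- Let q, r : ℝ → ℂ be continuous with qr integrable, E(x) = exp((i/2)∫_{-∞}^x q r), and ζ ∈ ℂ. Suppose (α̃, β̃) : ℝ → ℂ² is a differentiable solution of the Kaup–Newell linear system α̃' = -iζ²α̃ + ζ q̃ β̃, β̃' = ζ r̃ α̃ + iζ² β̃, where q̃(x) = E(x) q(x) and r̃(x) = E(x)⁻¹ r(x). Then (α, β) := (α̃, E·β̃) solves the Chen–Lee–Liu linear system α' = -iζ² α + ζ q β, β' = ζ r α + (iζ² + (i/2) q r) β. -/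
/-!
The gauge `E` satisfies `E' = (i/2) q r E`, by the fundamental theorem of calculus for
`∫_{-∞}^x q r`. Hence multiplying `β̃` by `E` turns the coupling `r̃ = E⁻¹ r` back into `r` and
adds `(i/2) q r` to the diagonal coefficient, while in the `α̃`-equation `q̃ β̃ = q (E β̃)`.
-/

open Complex MeasureTheory

theorem hasDerivAt_integral_Iic {F : Type*} [NormedAddCommGroup F] [NormedSpace ℝ F]
    [CompleteSpace F] {f : ℝ → F} {x : ℝ} (hf : Integrable f) (hx : ContinuousAt f x) :
    HasDerivAt (fun t => ∫ y in Set.Iic t, f y) (f x) x := by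
  have hsplit : ∀ t, ∫ y in Set.Iic t, f y = (∫ y in Set.Iic x, f y) + ∫ y in x..t, f y := by
    intro t
    rw [← intervalIntegral.integral_Iic_sub_Iic hf.integrableOn hf.integrableOn]
    abel
  rw [funext hsplit]
  exact (intervalIntegral.integral_hasDerivAt_right hf.intervalIntegrable
    hf.aestronglyMeasurable.stronglyMeasurableAtFilter hx).const_add _

theorem hasDerivAt_cexp_const_mul_integral_Iic {f : ℝ → ℂ} {x : ℝ} (c : ℂ) (hf : Integrable f)
    (hx : ContinuousAt f x) :
    HasDerivAt (fun t => exp (c * ∫ y in Set.Iic t, f y))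
      (c * f x * exp (c * ∫ y in Set.Iic x, f y)) x := by
  simpa only [mul_comm (exp _)] using ((hasDerivAt_integral_Iic hf hx).const_mul c).cexp

theorem HasDerivAt.gauge_mul {E β : ℝ → ℂ} {a c s : ℂ} {x : ℝ} (hE : HasDerivAt E (a * E x) x)
    (hE0 : E x ≠ 0) (hβ : HasDerivAt β ((E x)⁻¹ * s + c * β x) x) :
    HasDerivAt (fun y => E y * β y) (s + (a + c) * (E x * β x)) x := by
  refine (hE.mul hβ).congr_deriv ?_
  rw [mul_add, ← mul_assoc, mul_inv_cancel₀ hE0]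
  ring

theorem stmt1 (q r : ℝ → ℂ) (hq : Continuous q) (hr : Continuous r)
    (hint : Integrable (fun y => q y * r y))
    (E : ℝ → ℂ)
    (hE : ∀ x, E x = Complex.exp ((I / 2) * ∫ y in Set.Iic x, q y * r y))
    (ζ : ℂ) (qt rt : ℝ → ℂ)
    (hqt : ∀ x, qt x = E x * q x) (hrt : ∀ x, rt x = (E x)⁻¹ * r x)
    (αt βt : ℝ → ℂ)
    (hαt : ∀ x, HasDerivAt αt (-I * ζ ^ 2 * αt x + ζ * qt x * βt x) x)
    (hβt : ∀ x, HasDerivAt βt (ζ * rt x * αt x + I * ζ ^ 2 * βt x) x) :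
    (∀ x, HasDerivAt αt (-I * ζ ^ 2 * αt x + ζ * q x * (E x * βt x)) x) ∧
    (∀ x, HasDerivAt (fun x => E x * βt x)
      (ζ * r x * αt x + (I * ζ ^ 2 + (I / 2) * q x * r x) * (E x * βt x)) x) := by
  have hE_eq : E = fun x => exp ((I / 2) * ∫ y in Set.Iic x, q y * r y) := funext hE
  refine ⟨fun x => (hαt x).congr_deriv (by rw [hqt x]; ring), fun x => ?_⟩
  have hE_deriv : HasDerivAt E ((I / 2) * q x * r x * E x) x := by
    rw [hE_eq, mul_assoc _ (q x)]
    exact hasDerivAt_cexp_const_mul_integral_Iic _ hint (hq.mul hr).continuousAt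
  have hβ : HasDerivAt βt ((E x)⁻¹ * (ζ * r x * αt x) + I * ζ ^ 2 * βt x) x :=
    (hβt x).congr_deriv (by rw [hrt x]; ring)
  have := hE_deriv.gauge_mul (by rw [hE x]; exact exp_ne_zero _) hβ
  rwa [add_comm ((I / 2) * q x * r x)] at this
end

section
/- Let q, r : ℝ × ℝ → ℂ be smooth functions satisfying the Chen–Lee–Liu system i q_t + q_{xx} - i q q_x r = 0 and i r_t - r_{xx} - i q r r_x = 0. Define, for each ζ ∈ ℂ, the 2×2 matrices 𝒳 = [[-iζ², ζq],[ζr, iζ² + (i/2)qr]] and 𝒯 = [[-2iζ⁴ - iζ²qr, 2ζ³q + ζ(iq_x + (1/2)q²r)],[2ζ³r + ζ(-ir_x + (1/2)qr²), 2iζ⁴ + iζ²qr + (1/2)(q r_x - q_x r) + (i/4)q²r²]]. Then the zero-curvature equation 𝒳_t - 𝒯_x + 𝒳𝒯 - 𝒯𝒳 = 0 holds identically for all x, t ∈ ℝ and all ζ ∈ ℂ. -/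
open Complex

/-- Partial derivative in the first (spatial) variable. -/
noncomputable def px (f : ℝ × ℝ → ℂ) : ℝ × ℝ → ℂ :=
  fun p => deriv (fun x => f (x, p.2)) p.1

/-- Partial derivative in the second (time) variable. -/
noncomputable def pt (f : ℝ × ℝ → ℂ) : ℝ × ℝ → ℂ :=
  fun p => deriv (fun t => f (p.1, t)) p.2

/-- The AKNS matrix 𝒳 of the Chen–Lee–Liu system. -/
noncomputable def XM (q r : ℝ × ℝ → ℂ) (ζ : ℂ) (p : ℝ × ℝ) : Matrix (Fin 2) (Fin 2) ℂ :=
  !![-I * ζ ^ 2, ζ * q p;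
     ζ * r p, I * ζ ^ 2 + (I / 2) * q p * r p]

/-- The AKNS matrix 𝒯 of the Chen–Lee–Liu system. -/
noncomputable def TM (q r : ℝ × ℝ → ℂ) (ζ : ℂ) (p : ℝ × ℝ) : Matrix (Fin 2) (Fin 2) ℂ :=
  !![-2 * I * ζ ^ 4 - I * ζ ^ 2 * q p * r p,
     2 * ζ ^ 3 * q p + ζ * (I * px q p + (1 / 2) * (q p) ^ 2 * r p);
     2 * ζ ^ 3 * r p + ζ * (-I * px r p + (1 / 2) * q p * (r p) ^ 2),
     2 * I * ζ ^ 4 + I * ζ ^ 2 * q p * r p + (1 / 2) * (q p * px r p - px q p * r p)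
       + (I / 4) * (q p) ^ 2 * (r p) ^ 2]

lemma hx (f : ℝ × ℝ → ℂ) (hf : ContDiff ℝ (⊤ : ℕ∞) f) (x t : ℝ) :
    HasDerivAt (fun x' => f (x', t)) (px f (x, t)) x := by
  have h : DifferentiableAt ℝ (fun x' => f (x', t)) x :=
    ((hf.differentiable (by simp)).comp (differentiable_id.prodMk (differentiable_const t))) x
  exact h.hasDerivAt

lemma ht (f : ℝ × ℝ → ℂ) (hf : ContDiff ℝ (⊤ : ℕ∞) f) (x t : ℝ) :
    HasDerivAt (fun t' => f (x, t')) (pt f (x, t)) t := by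
  have h : DifferentiableAt ℝ (fun t' => f (x, t')) t :=
    ((hf.differentiable (by simp)).comp ((differentiable_const x).prodMk differentiable_id)) t
  exact h.hasDerivAt

lemma px_eq (f : ℝ × ℝ → ℂ) (hf : ContDiff ℝ (⊤ : ℕ∞) f) :
    px f = fun p => fderiv ℝ f p (1, 0) := by
  funext p
  have h1 : HasDerivAt (fun x : ℝ => (x, p.2)) ((1 : ℝ), (0 : ℝ)) p.1 :=
    (hasDerivAt_id p.1).prodMk (hasDerivAt_const p.1 p.2)
  have h2 : HasDerivAt (fun x : ℝ => f (x, p.2)) (fderiv ℝ f p (1, 0)) p.1 :=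
    ((hf.differentiable (by simp) (p.1, p.2)).hasFDerivAt.comp_hasDerivAt p.1 h1)
  exact h2.deriv

lemma contDiff_px (f : ℝ × ℝ → ℂ) (hf : ContDiff ℝ (⊤ : ℕ∞) f) : ContDiff ℝ (⊤ : ℕ∞) (px f) := by
  rw [px_eq f hf]
  exact (hf.fderiv_right (by simp)).clm_apply contDiff_const

theorem stmt2 (q r : ℝ × ℝ → ℂ) (hq : ContDiff ℝ (⊤ : ℕ∞) q) (hr : ContDiff ℝ (⊤ : ℕ∞) r)
    (hq_pde : ∀ p : ℝ × ℝ, I * pt q p + px (px q) p - I * q p * px q p * r p = 0)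
    (hr_pde : ∀ p : ℝ × ℝ, I * pt r p - px (px r) p - I * q p * r p * px r p = 0) :
    ∀ (ζ : ℂ) (x t : ℝ),
      (Matrix.of fun i j => deriv (fun t' => XM q r ζ (x, t') i j) t)
        - (Matrix.of fun i j => deriv (fun x' => TM q r ζ (x', t) i j) x)
        + XM q r ζ (x, t) * TM q r ζ (x, t) - TM q r ζ (x, t) * XM q r ζ (x, t) = 0 := by
  intro ζ x t
  have Hq := hx q hq x t
  have Hr := hx r hr x t
  have Hqx := hx (px q) (contDiff_px q hq) x t
  have Hrx := hx (px r) (contDiff_px r hr) x t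
  have Hqt := ht q hq x t
  have Hrt := ht r hr x t
  have Hq2 : HasDerivAt (fun x' => q (x', t) ^ 2) (px q (x, t) * q (x, t) + q (x, t) * px q (x, t)) x := by
    simpa [pow_two] using Hq.fun_mul Hq
  have Hr2 : HasDerivAt (fun x' => r (x', t) ^ 2) (px r (x, t) * r (x, t) + r (x, t) * px r (x, t)) x := by
    simpa [pow_two] using Hr.fun_mul Hr
  set Q := q (x, t)
  set R := r (x, t)
  set Qx := px q (x, t)
  set Rx := px r (x, t)
  set Qxx := px (px q) (x, t)
  set Rxx := px (px r) (x, t)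
  set Qt := pt q (x, t)
  set Rt := pt r (x, t)
  have hXt : (Matrix.of fun i j => deriv (fun t' => XM q r ζ (x, t') i j) t)
      = !![0, ζ * Qt; ζ * Rt, I / 2 * Qt * R + I / 2 * Q * Rt] := by
    ext i j
    fin_cases i <;> fin_cases j
    · exact deriv_const t (-I * ζ ^ 2)
    · exact (Hqt.const_mul ζ).deriv
    · exact (Hrt.const_mul ζ).deriv
    · have h : deriv (fun t' => I * ζ ^ 2 + I / 2 * q (x, t') * r (x, t')) t
          = I / 2 * Qt * R + I / 2 * Q * Rt :=
        (((hasDerivAt_const t (I * ζ ^ 2)).add ((Hqt.const_mul (I / 2)).mul Hrt)).deriv).trans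
          (by ring)
      exact h
  have hTx : (Matrix.of fun i j => deriv (fun x' => TM q r ζ (x', t) i j) x)
      = !![-(I * ζ ^ 2 * Qx * R + I * ζ ^ 2 * Q * Rx),
           2 * ζ ^ 3 * Qx + ζ * (I * Qxx + Q * Qx * R + 1 / 2 * Q ^ 2 * Rx);
           2 * ζ ^ 3 * Rx + ζ * (-I * Rxx + 1 / 2 * Qx * R ^ 2 + Q * R * Rx),
           I * ζ ^ 2 * Qx * R + I * ζ ^ 2 * Q * Rx
             + 1 / 2 * (Q * Rxx - Qxx * R)
             + I / 2 * Q * Qx * R ^ 2 + I / 2 * Q ^ 2 * R * Rx] := by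
    ext i j
    fin_cases i <;> fin_cases j
    · have h : deriv (fun x' => -2 * I * ζ ^ 4 - I * ζ ^ 2 * q (x', t) * r (x', t)) x
          = -(I * ζ ^ 2 * Qx * R + I * ζ ^ 2 * Q * Rx) :=
        (((hasDerivAt_const x (-2 * I * ζ ^ 4)).sub ((Hq.const_mul (I * ζ ^ 2)).mul Hr)).deriv).trans
          (by ring)
      exact h
    · have h : deriv (fun x' => 2 * ζ ^ 3 * q (x', t)
            + ζ * (I * px q (x', t) + 1 / 2 * q (x', t) ^ 2 * r (x', t))) x
          = 2 * ζ ^ 3 * Qx + ζ * (I * Qxx + Q * Qx * R + 1 / 2 * Q ^ 2 * Rx) :=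
        (((Hq.const_mul (2 * ζ ^ 3)).add
            (((Hqx.const_mul I).add ((Hq2.const_mul (1 / 2)).mul Hr)).const_mul ζ)).deriv).trans
          (by ring)
      exact h
    · have h : deriv (fun x' => 2 * ζ ^ 3 * r (x', t)
            + ζ * (-I * px r (x', t) + 1 / 2 * q (x', t) * r (x', t) ^ 2)) x
          = 2 * ζ ^ 3 * Rx + ζ * (-I * Rxx + 1 / 2 * Qx * R ^ 2 + Q * R * Rx) :=
        (((Hr.const_mul (2 * ζ ^ 3)).add
            (((Hrx.const_mul (-I)).add (((Hq.const_mul (1 / 2)).mul Hr2))).const_mul ζ)).deriv).trans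
          (by ring)
      exact h
    · have h : deriv (fun x' => 2 * I * ζ ^ 4 + I * ζ ^ 2 * q (x', t) * r (x', t)
            + 1 / 2 * (q (x', t) * px r (x', t) - px q (x', t) * r (x', t))
            + I / 4 * q (x', t) ^ 2 * r (x', t) ^ 2) x
          = I * ζ ^ 2 * Qx * R + I * ζ ^ 2 * Q * Rx
             + 1 / 2 * (Q * Rxx - Qxx * R)
             + I / 2 * Q * Qx * R ^ 2 + I / 2 * Q ^ 2 * R * Rx :=
        (((((hasDerivAt_const x (2 * I * ζ ^ 4)).add ((Hq.const_mul (I * ζ ^ 2)).mul Hr)).add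
            (((Hq.mul Hrx).sub (Hqx.mul Hr)).const_mul (1 / 2))).add
            (((Hq2.const_mul (I / 4)).mul Hr2))).deriv).trans
          (by ring)
      exact h
  rw [hXt, hTx]
  have Pq := hq_pde (x, t)
  have Pr := hr_pde (x, t)
  ext i j
  fin_cases i <;> fin_cases j <;>
    simp [XM, TM, Matrix.mul_apply, Fin.sum_univ_two]
  · linear_combination
  · linear_combination (-I * ζ) * Pq + (ζ * Qt - 3 / 2 * ζ * Qx * Q * R - 2 * ζ ^ 3 * Qx) * Complex.I_sq
  · linear_combination (-I * ζ) * Pr + (ζ * Rt - 3 / 2 * ζ * Rx * R * Q - 2 * ζ ^ 3 * Rx) * Complex.I_sq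
  · linear_combination (R / 2) * Pq + (Q / 2) * Pr
end

section
/- Let n, m ∈ ℕ, A : Matrix (Fin n) (Fin n) ℂ with all eigenvalues having strictly positive imaginary part, Ā : Matrix (Fin m) (Fin m) ℂ with all eigenvalues having strictly negative imaginary part, B : Matrix (Fin n) (Fin 1) ℂ, and C̄ : Matrix (Fin 1) (Fin m) ℂ. Then the integral M := ∫₀^∞ exp(izA) · B · C̄ · exp(-izĀ) dz converges (the integrand is Bochner integrable on [0,∞)). -/
/-!
The generalized eigenspaces of `M` span `ℂⁿ`, and on the one for `μ` the matrix `M - μ` is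
nilpotent, so there `exp (t M) v = e^{tμ} p(t)` with `p` a vector-valued polynomial. Hence
`exp (t M) v = O(e^{st})` as `t → ∞` for every `s` above the real parts of the (finitely many) eigenvalues, and if these
are all negative we may take `s < 0`. Writing `i z A = z (i A)` and `-i z Ā = z (-i Ā)`, the
hypotheses say exactly that `i A` and `-i Ā` have spectrum in the left half-plane, so the
integrand is `O(e^{(s₁ + s₂) z})` with `s₁ + s₂ < 0`, and it is continuous.
-/

open Complex MeasureTheory NormedSpace

attribute [local instance] Matrix.frobeniusNormedAddCommGroup Matrix.frobeniusNormedSpace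

attribute [local instance] Matrix.frobeniusNormedRing Matrix.frobeniusNormedAlgebra

open Filter Asymptotics Finset Matrix
open scoped Nat Pointwise

theorem Real.isBigO_pow_mul_exp_of_lt (j : ℕ) {a s : ℝ} (h : a < s) :
    (fun t => t ^ j * Real.exp (a * t)) =O[atTop] fun t => Real.exp (s * t) := by
  refine ((isLittleO_pow_exp_pos_mul_atTop j (sub_pos.2 h)).isBigO.mul
    (isBigO_refl (fun t => Real.exp (a * t)) _)).congr_right fun t => ?_
  rw [← Real.exp_add]; ring_nf

theorem Complex.isBigO_exp_mul_pow_of_re_lt (j : ℕ) {μ : ℂ} {s : ℝ} (hμ : μ.re < s) :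
    (fun t : ℝ => cexp (t * μ) * (t : ℂ) ^ j) =O[atTop] fun t => Real.exp (s * t) :=
  (isBigO_of_le _ fun t => by simp [norm_exp, mul_comm]).trans
    (Real.isBigO_pow_mul_exp_of_lt j hμ)

theorem spectrum.smul_eq_smul_of_ne_zero {𝕜 𝔸 : Type*} [Field 𝕜] [Ring 𝔸] [Algebra 𝕜 𝔸] {k : 𝕜}
    (hk : k ≠ 0) (a : 𝔸) : spectrum 𝕜 (k • a) = k • spectrum 𝕜 a :=
  spectrum.unit_smul_eq_smul a (Units.mk0 k hk)

theorem MeasureTheory.integrableOn_Ioi_of_isBigO_exp {E : Type*} [NormedAddCommGroup E]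
    {f : ℝ → E} (hf : Continuous f) {s : ℝ} (hs : s < 0)
    (ho : f =O[atTop] fun t => Real.exp (s * t)) (a : ℝ) : IntegrableOn f (Set.Ioi a) :=
  (integrableOn_Ici_iff_integrableOn_Ioi (by finiteness)).mp <|
    (hf.continuousOn.locallyIntegrableOn measurableSet_Ici).integrableOn_of_isBigO_atTop ho
    ⟨Set.Ioi a, Ioi_mem_atTop a, by simpa using exp_neg_integrableOn_Ioi a (neg_pos.2 hs)⟩

namespace Matrix

theorem spectrum_transpose {ι R : Type*} [Fintype ι] [DecidableEq ι] [CommRing R]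
    (M : Matrix ι ι R) : spectrum R Mᵀ = spectrum R M := by
  ext μ
  rw [spectrum.mem_iff, spectrum.mem_iff, ← isUnit_transpose, transpose_sub,
    algebraMap_eq_diagonal, diagonal_transpose, transpose_transpose]

theorem isBigO_of_forall_isBigO_apply {α 𝕜 F m n : Type*} [Fintype m] [Fintype n]
    [NormedField 𝕜] [Norm F] {l : Filter α} {f : α → Matrix m n 𝕜} {g : α → F}
    (h : ∀ i j, (fun x => f x i j) =O[l] g) : f =O[l] g := by
  classical
  have hf : f = fun x => ∑ i, ∑ j, f x i j • single i j (1 : 𝕜) := by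
    funext x
    simpa [smul_single] using matrix_eq_sum_single (f x)
  rw [hf]
  refine IsBigO.fun_sum fun i _ => IsBigO.fun_sum fun j _ => ?_
  refine (isBigO_of_le' (c := ‖single i j (1 : 𝕜)‖) _ fun x => ?_).trans (h i j)
  exact (norm_smul_le _ _).trans_eq (mul_comm _ _)

theorem _root_.Asymptotics.IsBigO.matrix_mul {α 𝕜 m n p : Type*} [Fintype m] [Fintype n]
    [Fintype p] [RCLike 𝕜] {l : Filter α} {f : α → Matrix m n 𝕜} {g : α → Matrix n p 𝕜}
    {u v : α → ℝ} (hf : f =O[l] u) (hg : g =O[l] v) :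
    (fun x => f x * g x) =O[l] fun x => u x * v x :=
  (isBigO_of_le _ fun x => by
    rw [Real.norm_of_nonneg (by positivity)]; exact frobenius_norm_mul _ _).trans
    (hf.norm_left.mul hg.norm_left)

variable {ι : Type*} [Fintype ι] [DecidableEq ι]

theorem exp_mulVec_eq_sum_of_pow_mulVec_eq_zero {𝕂 : Type*} [RCLike 𝕂] {X : Matrix ι ι 𝕂}
    {v : ι → 𝕂} {l : ℕ} (h : (X ^ l) *ᵥ v = 0) :
    NormedSpace.exp X *ᵥ v = ∑ j ∈ range l, (j ! : 𝕂)⁻¹ • (X ^ j *ᵥ v) := by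
  have hsum := (NormedSpace.exp_series_hasSum_exp' (𝕂 := 𝕂) X).map (mulVec.addMonoidHomLeft v)
    (continuous_id.matrix_mulVec continuous_const)
  refine (hsum.unique (hasSum_sum_of_ne_finset_zero (s := range l) fun j hj => ?_)).trans ?_
  · obtain ⟨i, rfl⟩ := Nat.exists_eq_add_of_le (not_lt.1 (mem_range.not.1 hj))
    change ((_ : 𝕂) • X ^ (l + i)) *ᵥ v = 0
    rw [smul_mulVec, pow_add, pow_mul_comm, ← mulVec_mulVec, h, mulVec_zero, smul_zero]
  · exact sum_congr rfl fun j _ => smul_mulVec _ _ _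

theorem exp_eq_cexp_smul_exp_sub (M : Matrix ι ι ℂ) (μ : ℂ) :
    NormedSpace.exp M = cexp μ • NormedSpace.exp (M - μ • 1) := by
  rw [← Algebra.algebraMap_eq_smul_one]
  conv_lhs => rw [← add_sub_cancel (algebraMap ℂ (Matrix ι ι ℂ) μ) M]
  rw [Matrix.exp_add_of_commute _ _ (Algebra.commute_algebraMap_left _ _), Algebra.smul_def,
    exp_eq_exp_ℂ, NormedSpace.algebraMap_exp_comm]
  -- the two sides differ only in the (definitionally equal) topologies on matrices
  rfl

theorem isBigO_exp_smul_mulVec_of_pow_mulVec_eq_zero {M : Matrix ι ι ℂ} {μ : ℂ} {l : ℕ}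
    {v : ι → ℂ} (hv : ((M - μ • 1) ^ l) *ᵥ v = 0) {s : ℝ} (hμ : μ.re < s) :
    (fun t : ℝ => NormedSpace.exp ((t : ℂ) • M) *ᵥ v) =O[atTop] fun t => Real.exp (s * t) := by
  set N := M - μ • 1
  have hexpand (t : ℝ) : NormedSpace.exp ((t : ℂ) • M) *ᵥ v =
      ∑ j ∈ range l, (cexp (t * μ) * (t : ℂ) ^ j) • ((j ! : ℂ)⁻¹ • (N ^ j *ᵥ v)) := by
    have hl : ((t : ℂ) • N) ^ l *ᵥ v = 0 := by rw [smul_pow, smul_mulVec, hv, smul_zero]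
    rw [exp_eq_cexp_smul_exp_sub _ (t * μ), mul_smul, ← smul_sub, smul_mulVec,
      exp_mulVec_eq_sum_of_pow_mulVec_eq_zero hl, smul_sum]
    refine sum_congr rfl fun j _ => ?_
    rw [smul_pow, smul_mulVec, smul_comm _ ((t : ℂ) ^ j), smul_smul, smul_smul]
  simp_rw [hexpand]
  refine IsBigO.fun_sum fun j _ => ?_
  exact ((Complex.isBigO_exp_mul_pow_of_re_lt j hμ).smul
    (isBigO_const_const _ one_ne_zero _)).congr_right fun t => by simp

theorem isBigO_exp_smul_mulVec {M : Matrix ι ι ℂ} {s : ℝ}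
    (hs : ∀ μ ∈ spectrum ℂ M, μ.re < s) (v : ι → ℂ) :
    (fun t : ℝ => NormedSpace.exp ((t : ℂ) • M) *ᵥ v) =O[atTop] fun t => Real.exp (s * t) := by
  have hv : v ∈ ⨆ μ, Module.End.maxGenEigenspace M.toLin' μ := by
    rw [Module.End.iSup_maxGenEigenspace_eq_top]; trivial
  refine Submodule.iSup_induction _ (motive := fun v => (fun t : ℝ =>
    NormedSpace.exp ((t : ℂ) • M) *ᵥ v) =O[atTop] fun t => Real.exp (s * t)) hv ?_ ?_ ?_
  · intro μ w hw
    rcases eq_or_ne w 0 with rfl | hw0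
    · exact (isBigO_zero _ _).congr_left fun t => (mulVec_zero _).symm
    have hμ : μ ∈ spectrum ℂ M := by
      have : Module.End.HasUnifEigenvalue M.toLin' μ ⊤ :=
        fun h => hw0 ((Submodule.mem_bot ℂ).1 (h ▸ hw))
      simpa using (this.lt zero_lt_one).mem_spectrum
    obtain ⟨l, hl⟩ := (Module.End.mem_maxGenEigenspace _ _ _).1 hw
    rw [show toLin' M - μ • 1 = toLin' (M - μ • 1) by
      rw [map_sub, map_smul, toLin'_one, Module.End.one_eq_id], ← toLin'_pow, toLin'_apply] at hl
    exact isBigO_exp_smul_mulVec_of_pow_mulVec_eq_zero hl (hs μ hμ)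
  · exact (isBigO_zero _ _).congr_left fun t => (mulVec_zero _).symm
  · intro x y hx hy
    simpa only [mulVec_add] using hx.add hy

theorem isBigO_exp_smul_mul {κ : Type*} [Fintype κ] {M : Matrix ι ι ℂ} {s : ℝ}
    (hs : ∀ μ ∈ spectrum ℂ M, μ.re < s) (Y : Matrix ι κ ℂ) :
    (fun t : ℝ => NormedSpace.exp ((t : ℂ) • M) * Y) =O[atTop] fun t => Real.exp (s * t) :=
  isBigO_of_forall_isBigO_apply fun i k =>
    (isBigO_of_le (f := fun t : ℝ => (NormedSpace.exp ((t : ℂ) • M) * Y) i k) _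
      fun t => norm_le_pi_norm (NormedSpace.exp ((t : ℂ) • M) *ᵥ fun j => Y j k) i).trans
      (isBigO_exp_smul_mulVec hs fun j => Y j k)

theorem isBigO_mul_exp_smul {κ : Type*} [Fintype κ] {M : Matrix ι ι ℂ} {s : ℝ}
    (hs : ∀ μ ∈ spectrum ℂ M, μ.re < s) (Y : Matrix κ ι ℂ) :
    (fun t : ℝ => Y * NormedSpace.exp ((t : ℂ) • M)) =O[atTop] fun t => Real.exp (s * t) := by
  rw [← spectrum_transpose] at hs
  refine IsBigO.of_norm_left ((isBigO_exp_smul_mul hs Yᵀ).norm_left.congr_left fun t => ?_)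
  rw [← frobenius_norm_transpose (Y * _), transpose_mul, ← exp_transpose, transpose_smul]

theorem exists_neg_forall_spectrum_re_lt {M : Matrix ι ι ℂ}
    (hM : ∀ μ ∈ spectrum ℂ M, μ.re < 0) : ∃ s < 0, ∀ μ ∈ spectrum ℂ M, μ.re < s := by
  rcases (spectrum ℂ M).eq_empty_or_nonempty with h | h
  · exact ⟨-1, by norm_num, by simp [h]⟩
  obtain ⟨μ₀, hμ₀, hmax⟩ := Set.exists_max_image _ re M.finite_spectrum h
  exact ⟨μ₀.re / 2, by linarith [hM μ₀ hμ₀], fun μ hμ => by linarith [hmax μ hμ, hM μ₀ hμ₀]⟩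

end Matrix

theorem stmt6 (n m : ℕ)
    (A : Matrix (Fin n) (Fin n) ℂ) (Abar : Matrix (Fin m) (Fin m) ℂ)
    (hA : ∀ μ ∈ spectrum ℂ A, 0 < μ.im)
    (hAbar : ∀ ν ∈ spectrum ℂ Abar, ν.im < 0)
    (B : Matrix (Fin n) (Fin 1) ℂ) (Cbar : Matrix (Fin 1) (Fin m) ℂ) :
    @IntegrableOn ℝ (Matrix (Fin n) (Fin m) ℂ) _ _ SeminormedAddGroup.toContinuousENorm
      (fun z : ℝ => NormedSpace.exp ((I * z) • A) * B * Cbar * NormedSpace.exp ((-(I * z)) • Abar))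
      (Set.Ioi 0) volume := by
  have hIA : ∀ μ ∈ spectrum ℂ (I • A), μ.re < 0 := by
    rw [spectrum.smul_eq_smul_of_ne_zero I_ne_zero A]
    rintro _ ⟨ν, hν, rfl⟩
    simpa using hA ν hν
  have hIAbar : ∀ μ ∈ spectrum ℂ ((-I) • Abar), μ.re < 0 := by
    rw [spectrum.smul_eq_smul_of_ne_zero (neg_ne_zero.2 I_ne_zero) Abar]
    rintro _ ⟨ν, hν, rfl⟩
    simpa using hAbar ν hν
  obtain ⟨s₁, hs₁, hA'⟩ := exists_neg_forall_spectrum_re_lt hIA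
  obtain ⟨s₂, hs₂, hAbar'⟩ := exists_neg_forall_spectrum_re_lt hIAbar
  have hf : (fun z : ℝ => NormedSpace.exp ((I * z) • A) * B * Cbar *
      NormedSpace.exp ((-(I * z)) • Abar)) = fun z : ℝ =>
      (NormedSpace.exp ((z : ℂ) • I • A) * B) * (Cbar * NormedSpace.exp ((z : ℂ) • (-I) • Abar)) := by
    funext z
    simp only [smul_smul, neg_mul, mul_comm (z : ℂ), Matrix.mul_assoc]
  rw [hf]
  refine integrableOn_Ioi_of_isBigO_exp (by fun_prop) (add_neg hs₁ hs₂)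
    (((isBigO_exp_smul_mul hA' B).matrix_mul (isBigO_mul_exp_smul hAbar' Cbar)).congr_right
      fun t => ?_) 0
  rw [← Real.exp_add, add_mul]
end

section
/- Define q(x,t) = 8 e^{2x + 4it + 2i·arctan(4e^{4x})}/(1 + 4i e^{4x}) and r(x,t) = conj(q(x,t)) = 8 e^{2x - 4it - 2i·arctan(4e^{4x})}/(1 - 4i e^{4x}). Then the pair (q, r) solves the Chen–Lee–Liu system: i q_t + q_{xx} - i q q_x r = 0 and i r_t - r_{xx} - i q r r_x = 0 for all x, t ∈ ℝ. -/
/-!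
Since `exp (2 i arctan y) = (1 + i y) / (1 - i y)`, the solution separates as
`q = 8 e^{4it} φ(x)` and `r = 8 e^{-4it} φ̄(x)`, where `φ = profile (-4i)` and
`profile c x = e^{2x} / (1 + c e^{4x})`. For every `c` off the real axis,
`φ_c'' - 4 φ_c = -16 c φ_c φ_c' φ_{-c}`, and with `c = ∓4i` each of the two equations
reduces to this identity.
-/

open Complex Real

theorem px_mul (a b : ℝ → ℂ) : px (fun p => a p.2 * b p.1) = fun p => a p.2 * deriv b p.1 :=
  funext fun p => deriv_const_mul_field (a p.2)

theorem pt_mul (a b : ℝ → ℂ) : pt (fun p => a p.2 * b p.1) = fun p => deriv a p.2 * b p.1 :=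
  funext fun p => deriv_mul_const_field (b p.1)

theorem exp_two_mul_I_arctan (y : ℝ) :
    cexp (2 * I * Real.arctan y) = (1 + y * I) / (1 - y * I) := by
  have hw : (1 + y * I) / (1 - y * I) ≠ 0 := by
    refine div_ne_zero ?_ ?_ <;> intro h <;> simpa using congrArg re h
  have hlog : 2 * I * (-I / 2 * log ((1 + y * I) / (1 - y * I))) =
      log ((1 + y * I) / (1 - y * I)) := by
    ring_nf
    rw [I_sq]
    ring
  rw [ofReal_arctan, Complex.arctan, hlog, exp_log hw]

theorem hasDerivAt_cexp_mul_ofReal (w : ℂ) (t : ℝ) :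
    HasDerivAt (fun t : ℝ => cexp (w * t)) (w * cexp (w * t)) t := by
  simpa [mul_comm] using (((hasDerivAt_id (t : ℂ)).const_mul w).cexp).comp_ofReal

theorem one_add_mul_ofReal_ne_zero {c : ℂ} (hc : c.im ≠ 0) (s : ℝ) : 1 + c * s ≠ 0 := by
  intro h
  have him : c.im * s = 0 := by simpa using congrArg im h
  obtain rfl : s = 0 := (mul_eq_zero.1 him).resolve_left hc
  simp at h

theorem one_add_mul_cexp_ne_zero {c z : ℂ} (hc : c.im ≠ 0) (hz : z.im = 0) :
    1 + c * cexp z ≠ 0 := by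
  rw [← re_add_im z, hz, ofReal_zero, zero_mul, add_zero, ← ofReal_exp]
  exact one_add_mul_ofReal_ne_zero hc _

noncomputable def profile (c : ℂ) (x : ℝ) : ℂ :=
  cexp (2 * x) / (1 + c * cexp (4 * x))

section profile

variable {c : ℂ}

theorem hasDerivAt_profile {x : ℝ} (hx : 1 + c * cexp (4 * x) ≠ 0) :
    HasDerivAt (profile c)
      (2 * cexp (2 * x) * (1 - c * cexp (4 * x)) / (1 + c * cexp (4 * x)) ^ 2) x := by
  refine ((hasDerivAt_cexp_mul_ofReal 2 x).div
    (((hasDerivAt_cexp_mul_ofReal 4 x).const_mul c).const_add 1) hx).congr_deriv ?_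
  field_simp
  ring

theorem hasDerivAt_profile_deriv {x : ℝ} (hx : 1 + c * cexp (4 * x) ≠ 0) :
    HasDerivAt
      (fun x : ℝ => 2 * cexp (2 * x) * (1 - c * cexp (4 * x)) / (1 + c * cexp (4 * x)) ^ 2)
      (4 * cexp (2 * x) * (1 - 6 * c * cexp (4 * x) + c ^ 2 * cexp (4 * x) ^ 2) /
        (1 + c * cexp (4 * x)) ^ 3) x := by
  have h2 := hasDerivAt_cexp_mul_ofReal 2 x
  have h4 := (hasDerivAt_cexp_mul_ofReal 4 x).const_mul c
  refine (((h2.const_mul 2).mul (h4.const_sub 1)).div ((h4.const_add 1).pow 2)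
    (pow_ne_zero 2 hx)).congr_deriv ?_
  simp only [Pi.mul_apply, Pi.pow_apply]
  rw [div_eq_div_iff (pow_ne_zero 2 (pow_ne_zero 2 hx)) (pow_ne_zero 3 hx)]
  ring

theorem deriv_profile (hc : c.im ≠ 0) :
    deriv (profile c) = fun x : ℝ =>
      2 * cexp (2 * x) * (1 - c * cexp (4 * x)) / (1 + c * cexp (4 * x)) ^ 2 :=
  funext fun x => (hasDerivAt_profile (one_add_mul_cexp_ne_zero hc (by simp))).deriv

theorem deriv_deriv_profile_sub_four_mul (hc : c.im ≠ 0) (x : ℝ) :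
    deriv (deriv (profile c)) x - 4 * profile c x =
      -16 * c * profile c x * deriv (profile c) x * profile (-c) x := by
  have hD := one_add_mul_cexp_ne_zero hc (z := 4 * x) (by simp)
  have hD' : 1 - c * cexp (4 * x) ≠ 0 := by
    simpa [sub_eq_add_neg] using
      one_add_mul_cexp_ne_zero (c := -c) (by simpa using hc) (z := 4 * x) (by simp)
  have hprod : deriv (profile c) x * profile (-c) x =
      2 * cexp (2 * x) ^ 2 / (1 + c * cexp (4 * x)) ^ 2 := by
    rw [deriv_profile hc, profile, neg_mul, ← sub_eq_add_neg, div_mul_div_comm,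
      div_eq_div_iff (mul_ne_zero (pow_ne_zero 2 hD) hD') (pow_ne_zero 2 hD)]
    ring
  have h4 : cexp (4 * x) = cexp (2 * x) ^ 2 := by
    rw [← Complex.exp_nat_mul]
    ring_nf
  rw [mul_assoc _ _ (profile (-c) x), hprod, deriv_profile hc, (hasDerivAt_profile_deriv hD).deriv,
    profile]
  rw [h4] at hD ⊢
  field_simp
  ring

theorem starRingEnd_profile (c : ℂ) (x : ℝ) :
    starRingEnd ℂ (profile c x) = profile (starRingEnd ℂ c) x := by
  simp [profile, ← exp_conj, map_ofNat]

end profile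

theorem soliton_eq_mul_profile (x t : ℝ) :
    8 * Complex.exp (2 * x + 4 * I * t + 2 * I * Real.arctan (4 * Real.exp (4 * x)))
        / (1 + 4 * I * Complex.exp (4 * x)) =
      8 * cexp (4 * I * t) * profile (-(4 * I)) x := by
  have hD := one_add_mul_cexp_ne_zero (c := 4 * I) (by simp) (z := 4 * x) (by simp)
  have hD' := one_add_mul_cexp_ne_zero (c := -(4 * I)) (by simp) (z := 4 * x) (by simp)
  rw [Complex.exp_add, Complex.exp_add, exp_two_mul_I_arctan, profile]
  push_cast
  rw [show 1 + 4 * cexp (4 * x) * I = 1 + 4 * I * cexp (4 * x) by ring,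
    show 1 - 4 * cexp (4 * x) * I = 1 + -(4 * I) * cexp (4 * x) by ring, div_eq_iff hD]
  field_simp

theorem stmt13 (q r : ℝ × ℝ → ℂ)
    (hq : ∀ p : ℝ × ℝ, q p =
      8 * Complex.exp (2 * p.1 + 4 * I * p.2 + 2 * I * Real.arctan (4 * Real.exp (4 * p.1)))
        / (1 + 4 * I * Complex.exp (4 * p.1)))
    (hr : ∀ p : ℝ × ℝ, r p = starRingEnd ℂ (q p)) :
    (∀ p : ℝ × ℝ, I * pt q p + px (px q) p - I * q p * px q p * r p = 0) ∧
    (∀ p : ℝ × ℝ, I * pt r p - px (px r) p - I * q p * r p * px r p = 0) := by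
  have key₁ := deriv_deriv_profile_sub_four_mul (c := -(4 * I)) (by simp)
  have key₂ := deriv_deriv_profile_sub_four_mul (c := 4 * I) (by simp)
  rw [neg_neg] at key₁
  set φ := profile (-(4 * I))
  set ψ := profile (4 * I)
  set A : ℝ → ℂ := fun t => 8 * cexp (4 * I * t) with hA
  set B : ℝ → ℂ := fun t => 8 * cexp (-(4 * I) * t) with hB
  have hq' : q = fun p => A p.2 * φ p.1 :=
    funext fun p => (hq p).trans (soliton_eq_mul_profile p.1 p.2)
  have hr' : r = fun p => B p.2 * ψ p.1 := by
    funext p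
    simp [hr, hq', hA, hB, φ, ψ, starRingEnd_profile, ← exp_conj, map_ofNat]
  have hA' : ∀ t, deriv A t = 4 * I * A t := fun t =>
    ((hasDerivAt_cexp_mul_ofReal _ t).const_mul 8).deriv.trans (by ring)
  have hB' : ∀ t, deriv B t = -(4 * I) * B t := fun t =>
    ((hasDerivAt_cexp_mul_ofReal _ t).const_mul 8).deriv.trans (by ring)
  have hAB : ∀ t, A t * B t = 64 := fun t => by
    rw [hA, hB, mul_mul_mul_comm, ← Complex.exp_add, neg_mul, add_neg_cancel, Complex.exp_zero]
    norm_num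
  refine ⟨fun p => ?_, fun p => ?_⟩ <;> rw [hq', hr'] <;> simp only [px_mul, pt_mul, hA', hB']
  · linear_combination A p.2 * key₁ p.1 - I * A p.2 * φ p.1 * deriv φ p.1 * ψ p.1 * hAB p.2 +
      4 * A p.2 * φ p.1 * I_sq
  · linear_combination -B p.2 * key₂ p.1 - I * B p.2 * φ p.1 * ψ p.1 * deriv ψ p.1 * hAB p.2 -
      4 * B p.2 * ψ p.1 * I_sq
end

section
/- Let Ω, Ω̄ : ℝ → ℂ be given in the reflectionless one-soliton case by Ω(y) = i e^{iy·i} = i e^{-y} and Ω̄(y) = -i e^{-y}, i.e. Ω(y) = C e^{iAy} B and Ω̄(y) = C̄ e^{-iĀy} B̄ with A = i, B = 1, C = i, Ā = -i, B̄ = 1, C̄ = -i. Define K₁(x,y) = -C̄ e^{-iĀx} Γ̄(x)⁻¹ e^{-iĀy} B̄ where Γ̄(x) = 1 - e^{-iĀx} M̄ A e^{2iAx} M e^{-iĀx}, M = -i/2, M̄ = i/2. Then K₁ satisfies the uncoupled Marchenko equation K₁(x,y) + Ω̄(x+y) + i ∫_x^∞ ∫_x^∞ K₁(x,z) Ω'(z+s)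 Ω̄(s+y) ds dz = 0 for all x < y. -/
/-!
With the given data every function is an explicit multiple of an exponential: writing
`u = e^{-x}`, `v = e^{-y}`, one has `K₁(x,z) = i u e^{-z} / Γ̄(x)`, `Ω'(t) = Ω̄(t) = -i e^{-t}` and
`Γ̄(x) = 1 - i u⁴/4`. The integrand separates as `c e^{-2z} e^{-2s}` with `c = -i u v / Γ̄(x)`, so
the double integral is `c u⁴/4`, and the left-hand side equals `u v (i - i Γ̄(x) + u⁴/4) / Γ̄(x)`,
which vanishes by the formula for `Γ̄`.
-/

open Complex MeasureTheory

theorem integral_Ioi_integral_Ioi_mul_cexp {a : ℂ} (ha : a.re < 0) (c : ℂ) (x : ℝ) :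
    ∫ z in Set.Ioi x, ∫ s in Set.Ioi x, c * cexp (a * z) * cexp (a * s) =
      c * (cexp (a * x) / a) ^ 2 := by
  simp_rw [integral_const_mul, integral_exp_mul_complex_Ioi ha, integral_mul_const,
    integral_const_mul, integral_exp_mul_complex_Ioi ha]
  ring

theorem one_sub_I_mul_ofReal_ne_zero (r : ℝ) : 1 - I * r ≠ 0 := fun h => by
  simpa using congrArg re h

theorem hasDerivAt_const_mul_cexp_neg (c : ℂ) (t : ℝ) :
    HasDerivAt (fun t : ℝ => c * cexp (-t)) (-c * cexp (-t)) t := by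
  simpa [neg_mul, mul_neg] using
    (((hasDerivAt_id (t : ℂ)).neg).cexp.const_mul c).comp_ofReal

theorem cexp_neg_two_mul (t : ℂ) : cexp (-2 * t) = cexp (-t) ^ 2 := by
  rw [← exp_nat_mul]
  ring_nf

theorem stmt14 (A B C Abar Bbar Cbar M Mbar : ℂ)
    (hA : A = I) (hB : B = 1) (hC : C = I)
    (hAbar : Abar = -I) (hBbar : Bbar = 1) (hCbar : Cbar = -I)
    (hM : M = -I / 2) (hMbar : Mbar = I / 2)
    (Ω Ωbar : ℝ → ℂ)
    (hΩ : ∀ y, Ω y = C * Complex.exp (I * A * y) * B)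
    (hΩbar : ∀ y, Ωbar y = Cbar * Complex.exp (-(I * Abar * y)) * Bbar)
    (Γbar : ℝ → ℂ)
    (hΓbar : ∀ x, Γbar x = 1 - Complex.exp (-(I * Abar * x)) * Mbar * A *
      Complex.exp (2 * I * A * x) * M * Complex.exp (-(I * Abar * x)))
    (K₁ : ℝ → ℝ → ℂ)
    (hK₁ : ∀ x y, K₁ x y =
      -Cbar * Complex.exp (-(I * Abar * x)) * (Γbar x)⁻¹ * Complex.exp (-(I * Abar * y)) * Bbar) :
    ∀ x y : ℝ, x < y →
      K₁ x y + Ωbar (x + y)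
        + I * ∫ z in Set.Ioi x, ∫ s in Set.Ioi x, K₁ x z * deriv Ω (z + s) * Ωbar (s + y) = 0 := by
  subst hA hB hC hAbar hBbar hCbar hM hMbar
  intro x y _
  have hI : ∀ t : ℂ, I * -I * t = t := fun t => by rw [mul_neg, I_mul_I, neg_neg, one_mul]
  have hΩ' : Ω = fun t : ℝ => I * cexp (-t) := funext fun t => by
    rw [hΩ, I_mul_I, neg_one_mul, mul_one]
  have hderiv : ∀ t, deriv Ω t = -I * cexp (-t) := fun t => by
    rw [hΩ', (hasDerivAt_const_mul_cexp_neg I t).deriv]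
  have hΩbar' : ∀ t, Ωbar t = -I * cexp (-t) := fun t => by rw [hΩbar, hI, mul_one]
  have hK : ∀ z, K₁ x z = I * cexp (-x) / Γbar x * cexp (-z) := fun z => by
    rw [hK₁, hI, hI, neg_neg, mul_one, div_eq_mul_inv]
  have hΓ : Γbar x = 1 - I * (cexp (-x) ^ 4 / 4) := by
    rw [hΓbar, hI, show 2 * I * I * (x : ℂ) = -2 * x by linear_combination (2 * x) * I_sq,
      cexp_neg_two_mul]
    linear_combination (I * cexp (-x) ^ 4 / 4) * I_sq
  have hΓ0 : Γbar x ≠ 0 := by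
    have hreal : cexp (-x) ^ 4 / 4 = ((Real.exp (-x) ^ 4 / 4 : ℝ) : ℂ) := by
      push_cast [ofReal_exp]; rfl
    exact hΓ ▸ hreal ▸ one_sub_I_mul_ofReal_ne_zero _
  have hintegrand : ∀ z s : ℝ, K₁ x z * deriv Ω (z + s) * Ωbar (s + y) =
      -I * cexp (-x) * cexp (-y) / Γbar x * cexp (-2 * z) * cexp (-2 * s) := fun z s => by
    simp only [hK, hderiv, hΩbar', cexp_neg_two_mul, ofReal_add, neg_add, exp_add]
    linear_combination (I * cexp (-x) * cexp (-y) * cexp (-z) ^ 2 * cexp (-s) ^ 2 / Γbar x) * I_sq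
  simp_rw [hintegrand, integral_Ioi_integral_Ioi_mul_cexp (a := -2) (by simp), hK, hΩbar',
    cexp_neg_two_mul, ofReal_add, neg_add, exp_add]
  field_simp
  linear_combination (-4 * I * cexp (-x) * cexp (-y)) * hΓ
end
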